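/- arXiv:2001.03029 — 2 statements merged into one kernel-verified Lean document; each statement's English description precedes it below -/
import Mathlib

section
/- Fix $k,a,\sigma>0$ and $H\in(0,1/2)$, and let $g:[0,\infty)\to\mathbb{R}$ be a function which is locally H\"older continuous of every order $\gamma < H$ (i.e. for every $T>0$ and $\gamma\in(0,H)$ there is $C>0$ with $|g(t)-g(s)|\le C|t-s|^{\gamma}$ for $0\le s\le t\le T$). Under the setup of the pathwise $\varepsilon$-approximations driven by $g$ with finite pointwise limit $Y$, the limit satisfies $Y(t)\ge 0$ for all $t\ge 0$; hence $\{t\ge 0 : Y(t)\le 0\}=\{t\ge 0 : Y(t)=0\}$. -/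
open Filter Topology MeasureTheory Set

/-!
Fix `t ≥ 0` and suppose `Y_ε(t) < 0`. Let `τ` be the last zero of `Y_ε` before `t`. On `[τ, t]`
the process is nonpositive, so the drift `k / (Y_ε⁺ + ε)` equals `k / ε` and the mean-reversion
term only pushes upwards; hence `Y_ε(t) ≥ (k/ε)(t - τ) - σ C (t - τ)^γ` by the Hölder bound on
`g`. Minimising over `u = t - τ` (split at `u = √ε`) gives `Y_ε(t) ≥ -σ C (√ε)^γ`, which tends
to `0` with `ε`.
-/

def IsEpsApproximation (Y₀ k a σ ε : ℝ) (g y : ℝ → ℝ) : Prop :=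
  Continuous y ∧ ∀ t : ℝ, 0 ≤ t →
    y t = Y₀ + (∫ s in (0:ℝ)..t, k / ((if 0 < y s then y s else 0) + ε))
      - a * (∫ s in (0:ℝ)..t, y s) + σ * g t

lemma ite_pos_self_eq_max {α : Type*} [LinearOrder α] [Zero α] (x : α) :
    (if 0 < x then x else 0) = max x 0 := by
  split_ifs with h
  · exact (max_eq_left h.le).symm
  · exact (max_eq_right (not_lt.1 h)).symm

lemma ContinuousOn.exists_zero_nonpos_on_Icc {f : ℝ → ℝ} {a b : ℝ} (hab : a ≤ b)
    (hf : ContinuousOn f (Icc a b)) (ha : 0 ≤ f a) (hb : f b < 0) :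
    ∃ τ ∈ Ico a b, f τ = 0 ∧ ∀ s ∈ Icc τ b, f s ≤ 0 := by
  set S := Icc a b ∩ f ⁻¹' Ici 0
  have hS : IsClosed S := hf.preimage_isClosed_of_isClosed isClosed_Icc isClosed_Ici
  have hS_bdd : BddAbove S := ⟨b, fun s hs => hs.1.2⟩
  obtain ⟨⟨haτ, hτb⟩, hfτ⟩ : sSup S ∈ S := hS.csSup_mem ⟨a, ⟨le_rfl, hab⟩, ha⟩ hS_bdd
  set τ := sSup S
  have hafter : ∀ s ∈ Ioc τ b, f s < 0 := fun s hs =>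
    not_le.1 fun hfs => (le_csSup hS_bdd ⟨⟨haτ.trans hs.1.le, hs.2⟩, hfs⟩).not_gt hs.1
  have hτ_lt : τ < b := hτb.lt_of_ne fun h => (h ▸ hb).not_ge hfτ
  -- a zero on `[τ, b]` lies in `S`, hence is `τ` itself
  obtain ⟨z, ⟨hτz, hzb⟩, hfz⟩ := intermediate_value_Icc' hτb (hf.mono (Icc_subset_Icc_left haτ))
    ⟨hb.le, hfτ⟩
  have hzτ : z = τ := le_antisymm (le_csSup hS_bdd ⟨⟨haτ.trans hτz, hzb⟩, hfz.ge⟩) hτz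
  refine ⟨τ, ⟨haτ, hτ_lt⟩, hzτ ▸ hfz, fun s hs => ?_⟩
  rcases hs.1.eq_or_lt with rfl | hτs
  · exact (hzτ ▸ hfz).le
  · exact (hafter s ⟨hτs, hs.2⟩).le

lemma neg_mul_sqrt_rpow_le_mul_div_sub {k c γ ε u T : ℝ} (hk : 0 ≤ k) (hc : 0 ≤ c)
    (hγ : 0 ≤ γ) (hε : 0 < ε) (hu : 0 ≤ u) (huT : u ≤ T) (hsmall : c * T ^ γ * √ε ≤ k) :
    -(c * √ε ^ γ) ≤ u * (k / ε) - c * u ^ γ := by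
  have hsqrt : 0 < √ε := Real.sqrt_pos.2 hε
  rcases le_or_gt u √ε with hu_small | hu_large
  · have : c * u ^ γ ≤ c * √ε ^ γ := by gcongr
    have : 0 ≤ u * (k / ε) := by positivity
    linarith
  · have hdrift : k / √ε ≤ u * (k / ε) := calc
      k / √ε = √ε * (k / ε) := by
        field_simp
        rw [Real.sq_sqrt hε.le]
      _ ≤ u * (k / ε) := by gcongr
    have hholder : c * u ^ γ ≤ k / √ε := calc
      c * u ^ γ ≤ c * T ^ γ := by gcongr
      _ ≤ k / √ε := by rwa [le_div_iff₀ hsqrt]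
    have : 0 ≤ c * √ε ^ γ := by positivity
    linarith

namespace IsEpsApproximation

variable {Y₀ k a σ ε : ℝ} {g y : ℝ → ℝ}

lemma apply_zero (h : IsEpsApproximation Y₀ k a σ ε g y) (hg0 : g 0 = 0) : y 0 = Y₀ := by
  simpa [hg0] using h.2 0 le_rfl

lemma continuous_drift (h : IsEpsApproximation Y₀ k a σ ε g y) (hε : 0 < ε) :
    Continuous fun s => k / ((if 0 < y s then y s else 0) + ε) := by
  simp only [ite_pos_self_eq_max]
  exact continuous_const.div ((h.1.max continuous_const).add continuous_const)
    fun s => by positivity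

lemma sub_eq (h : IsEpsApproximation Y₀ k a σ ε g y) (hε : 0 < ε) {τ t : ℝ} (hτ : 0 ≤ τ)
    (ht : 0 ≤ t) :
    y t - y τ = (∫ s in τ..t, k / ((if 0 < y s then y s else 0) + ε))
      - a * (∫ s in τ..t, y s) + σ * (g t - g τ) := by
  have hdrift := (h.continuous_drift hε).intervalIntegrable (μ := volume)
  have hy := h.1.intervalIntegrable (μ := volume)
  rw [h.2 t ht, h.2 τ hτ, ← intervalIntegral.integral_interval_sub_left (hdrift 0 t) (hdrift 0 τ),
    ← intervalIntegral.integral_interval_sub_left (hy 0 t) (hy 0 τ)]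
  ring

lemma le_apply_of_nonpos_on (h : IsEpsApproximation Y₀ k a σ ε g y) (hε : 0 < ε) (ha : 0 ≤ a)
    (hσ : 0 ≤ σ) {τ t : ℝ} (hτ : 0 ≤ τ) (hτt : τ ≤ t) (hyτ : y τ = 0)
    (hneg : ∀ s ∈ Icc τ t, y s ≤ 0) :
    (t - τ) * (k / ε) - σ * |g t - g τ| ≤ y t := by
  have hdrift : (∫ s in τ..t, k / ((if 0 < y s then y s else 0) + ε)) = (t - τ) * (k / ε) := by
    rw [intervalIntegral.integral_congr (g := fun _ => k / ε), intervalIntegral.integral_const,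
      smul_eq_mul]
    intro s hs
    rw [uIcc_of_le hτt] at hs
    simp [not_lt.2 (hneg s hs)]
  have hmean : (∫ s in τ..t, y s) ≤ 0 := by
    simpa using intervalIntegral.integral_mono_on (g := fun _ => (0 : ℝ)) hτt
      (h.1.intervalIntegrable _ _) intervalIntegrable_const hneg
  have hincr := h.sub_eq hε hτ (hτ.trans hτt)
  rw [hdrift, hyτ] at hincr
  have : σ * -|g t - g τ| ≤ σ * (g t - g τ) := by gcongr; exact neg_abs_le _
  linarith [mul_nonpos_of_nonneg_of_nonpos ha hmean]

lemma neg_mul_sqrt_rpow_le (h : IsEpsApproximation Y₀ k a σ ε g y) (hε : 0 < ε)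
    (hY₀ : 0 ≤ Y₀) (hg0 : g 0 = 0) (hk : 0 ≤ k) (ha : 0 ≤ a) (hσ : 0 ≤ σ) {C γ T t : ℝ}
    (hC : 0 ≤ C) (hγ : 0 ≤ γ)
    (hHolder : ∀ s t : ℝ, 0 ≤ s → s ≤ t → t ≤ T → |g t - g s| ≤ C * (t - s) ^ γ)
    (ht : 0 ≤ t) (htT : t ≤ T) (hsmall : σ * C * T ^ γ * √ε ≤ k) :
    -(σ * C * √ε ^ γ) ≤ y t := by
  by_cases hyt : 0 ≤ y t
  · have : 0 ≤ σ * C * √ε ^ γ := by positivity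
    linarith
  obtain ⟨τ, ⟨hτ, hτt⟩, hyτ, hneg⟩ := h.1.continuousOn.exists_zero_nonpos_on_Icc ht
    ((h.apply_zero hg0).symm ▸ hY₀) (not_le.1 hyt)
  have hexcursion := h.le_apply_of_nonpos_on hε ha hσ hτ hτt.le hyτ hneg
  have hincr : σ * |g t - g τ| ≤ σ * C * (t - τ) ^ γ := by
    rw [mul_assoc]; gcongr; exact hHolder τ t hτ hτt.le htT
  have := neg_mul_sqrt_rpow_le_mul_div_sub hk (by positivity) hγ hε (sub_nonneg.2 hτt.le)
    (by linarith) hsmall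
  linarith

end IsEpsApproximation

lemma tendsto_mul_sqrt_rpow_nhdsGT_zero (c : ℝ) {γ : ℝ} (hγ : 0 < γ) :
    Tendsto (fun ε => c * √ε ^ γ) (𝓝[>] 0) (𝓝 0) := by
  have h := ((Real.continuous_sqrt.tendsto 0).rpow_const (Or.inr hγ.le)).const_mul c
  rw [Real.sqrt_zero, Real.zero_rpow hγ.ne', mul_zero] at h
  exact h.mono_left nhdsWithin_le_nhds

theorem limit_process_nonneg_general
    (Y₀ k a σ H : ℝ) (hY₀ : 0 < Y₀) (hk : 0 < k) (ha : 0 < a) (hσ : 0 < σ)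
    (hH : 0 < H)
    (g : ℝ → ℝ) (hg0 : g 0 = 0)
    (hHolder : ∀ T : ℝ, 0 < T → ∀ γ : ℝ, 0 < γ → γ < H →
      ∃ C : ℝ, 0 < C ∧ ∀ s t : ℝ, 0 ≤ s → s ≤ t → t ≤ T →
        |g t - g s| ≤ C * (t - s) ^ γ)
    (Y : ℝ → ℝ → ℝ) (Ylim : ℝ → ℝ)
    (hYc : ∀ ε : ℝ, 0 < ε → Continuous (Y ε))
    (hYeq : ∀ ε : ℝ, 0 < ε → ∀ t : ℝ, 0 ≤ t →
      Y ε t = Y₀ + (∫ s in (0:ℝ)..t, k / ((if 0 < Y ε s then Y ε s else 0) + ε))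
        - a * (∫ s in (0:ℝ)..t, Y ε s) + σ * g t)
    (hlim : ∀ t : ℝ, 0 ≤ t →
      Tendsto (fun ε => Y ε t) (𝓝[>] 0) (𝓝 (Ylim t))) :
    (∀ t : ℝ, 0 ≤ t → 0 ≤ Ylim t) ∧
    {t : ℝ | 0 ≤ t ∧ Ylim t ≤ 0} = {t : ℝ | 0 ≤ t ∧ Ylim t = 0} := by
  have hnonneg : ∀ t : ℝ, 0 ≤ t → 0 ≤ Ylim t := by
    intro t ht
    obtain ⟨C, hC, hHolderC⟩ := hHolder (t + 1) (by linarith) (H / 2) (by positivity) (by linarith)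
    have hsmall : ∀ᶠ ε in 𝓝[>] 0, σ * C * (t + 1) ^ (H / 2) * √ε ≤ k := by
      simpa using (tendsto_mul_sqrt_rpow_nhdsGT_zero (σ * C * (t + 1) ^ (H / 2))
        one_pos).eventually (ge_mem_nhds hk)
    have hlower : ∀ᶠ ε in 𝓝[>] 0, -(σ * C * √ε ^ (H / 2)) ≤ Y ε t := by
      filter_upwards [hsmall, self_mem_nhdsWithin] with ε hε (hε_pos : 0 < ε)
      exact IsEpsApproximation.neg_mul_sqrt_rpow_le ⟨hYc ε hε_pos, hYeq ε hε_pos⟩ hε_pos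
        hY₀.le hg0 hk.le ha.le hσ.le hC.le (by positivity) hHolderC ht (by linarith) hε
    simpa using le_of_tendsto_of_tendsto
      (tendsto_mul_sqrt_rpow_nhdsGT_zero (σ * C) (by positivity)).neg (hlim t ht) hlower
  refine ⟨hnonneg, ?_⟩
  ext t
  exact and_congr_right fun ht => (hnonneg t ht).ge_iff_eq'

/-- Pathwise version of Lemma 4: nonnegativity of the limit square root
process when the driving path is locally Hölder of every order γ < H,
H ∈ (0, 1/2). -/
theorem limit_process_nonneg
    (Y₀ k a σ H : ℝ) (hY₀ : 0 < Y₀) (hk : 0 < k) (ha : 0 < a) (hσ : 0 < σ)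
    (hH : 0 < H) (hH' : H < 1/2)
    (g : ℝ → ℝ) (hg : Continuous g) (hg0 : g 0 = 0)
    (hHolder : ∀ T : ℝ, 0 < T → ∀ γ : ℝ, 0 < γ → γ < H →
      ∃ C : ℝ, 0 < C ∧ ∀ s t : ℝ, 0 ≤ s → s ≤ t → t ≤ T →
        |g t - g s| ≤ C * (t - s) ^ γ)
    (Y : ℝ → ℝ → ℝ) (Ylim : ℝ → ℝ)
    (hYc : ∀ ε : ℝ, 0 < ε → Continuous (Y ε))
    (hYeq : ∀ ε : ℝ, 0 < ε → ∀ t : ℝ, 0 ≤ t →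
      Y ε t = Y₀ + (∫ s in (0:ℝ)..t, k / ((if 0 < Y ε s then Y ε s else 0) + ε))
        - a * (∫ s in (0:ℝ)..t, Y ε s) + σ * g t)
    (hlim : ∀ t : ℝ, 0 ≤ t →
      Tendsto (fun ε => Y ε t) (𝓝[>] 0) (𝓝 (Ylim t))) :
    (∀ t : ℝ, 0 ≤ t → 0 ≤ Ylim t) ∧
    {t : ℝ | 0 ≤ t ∧ Ylim t ≤ 0} = {t : ℝ | 0 ≤ t ∧ Ylim t = 0} :=
  limit_process_nonneg_general Y₀ k a σ H hY₀ hk ha hσ hH g hg0 hHolder Y Ylim hYc hYeq hlim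
end

section
/- Under the setup of the pathwise $\varepsilon$-approximations with pointwise limit $Y$: the limit $Y$ is continuous at every point of the open set $\{t\ge 0 : Y(t)>0\}$ (including $t=0$, where $Y(0)=Y_0>0$ and $\lim_{t\to 0+}Y(t)=Y_0$). -/
open Filter Topology MeasureTheory Set

/-!
Two solutions of the regularised equation with the same noise `σ g` differ by a `C¹` function
whose derivative is the difference of the drifts `f_ε(y) = k / (y⁺ + ε) - a y`. As `f_ε`
decreases strictly in `ε`, `Y_{ε₂} - Y_{ε₁}` (`ε₁ < ε₂`) cannot cross `0` upwards, so
`Y_ε ↑ Y` as `ε ↓ 0`. Where `Y_{ε₀} > 0` and `ε₀ ≤ θ`, a point with `Y_ε - Y_{ε₀} = θ` has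
`Y_ε + ε > Y_{ε₀} + ε₀`, so the difference is decreasing there and cannot cross `θ` either.
Choosing `ε₀` with `Y - Y_{ε₀} ≤ θ` at the left endpoint of such an interval makes the
convergence uniform on it, and `Y` is continuous there as a uniform limit.
-/
lemma hasDerivWithinAt_sub_of_eq_integral {u v φ ψ h : ℝ → ℝ} {c d : ℝ}
    (hφ : Continuous φ) (hψ : Continuous ψ)
    (hu : ∀ t, 0 ≤ t → u t = c + (∫ s in (0:ℝ)..t, φ s) + h t)
    (hv : ∀ t, 0 ≤ t → v t = d + (∫ s in (0:ℝ)..t, ψ s) + h t) {x : ℝ} (hx : 0 ≤ x) :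
    HasDerivWithinAt (fun t => u t - v t) (φ x - ψ x) (Ici x) x := by
  have hderiv : HasDerivAt
      (fun t => c - d + ((∫ s in (0:ℝ)..t, φ s) - ∫ s in (0:ℝ)..t, ψ s)) (φ x - ψ x) x :=
    ((hφ.integral_hasStrictDerivAt 0 x).hasDerivAt.sub
      (hψ.integral_hasStrictDerivAt 0 x).hasDerivAt).const_add _
  have heq : ∀ t ∈ Ici x,
      u t - v t = c - d + ((∫ s in (0:ℝ)..t, φ s) - ∫ s in (0:ℝ)..t, ψ s) := by
    intro t ht
    rw [hu t (hx.trans ht), hv t (hx.trans ht)]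
    ring
  exact hderiv.hasDerivWithinAt.congr heq (heq x self_mem_Ici)

lemma le_of_hasDerivWithinAt_neg_of_eq {f f' : ℝ → ℝ} {l r θ : ℝ}
    (hf : ContinuousOn f (Icc l r)) (hf' : ∀ x ∈ Ico l r, HasDerivWithinAt f (f' x) (Ici x) x)
    (hl : f l ≤ θ) (hθ : ∀ x ∈ Ico l r, f x = θ → f' x < 0) {x : ℝ} (hx : x ∈ Icc l r) :
    f x ≤ θ :=
  image_le_of_deriv_right_lt_deriv_boundary (B := fun _ => θ) hf hf' hl
    (fun x => hasDerivAt_const x θ) hθ hx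

lemma exists_Icc_subset_mem_nhdsWithin_Ici {a t : ℝ} {U : Set ℝ} (hU : U ∈ 𝓝 t) :
    ∃ l r, a ≤ l ∧ Icc l r ⊆ U ∧ Icc l r ∈ 𝓝[Ici a] t := by
  obtain ⟨b, c, -, hbc, hsub⟩ := exists_Icc_mem_subset_of_mem_nhds hU
  refine ⟨max b a, c, le_max_right _ _, (Icc_subset_Icc_left (le_max_left _ _)).trans hsub, ?_⟩
  exact mem_of_superset (inter_mem_nhdsWithin (Ici a) hbc)
    fun s ⟨has, hs⟩ => ⟨max_le hs.1 has, hs.2⟩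

noncomputable def drift (k a ε y : ℝ) : ℝ := k / (max y 0 + ε) - a * y

lemma continuous_drift {k a ε : ℝ} (hε : 0 < ε) : Continuous (drift k a ε) :=
  (continuous_const.div ((continuous_id.max continuous_const).add continuous_const)
    fun y => (add_pos_of_nonneg_of_pos (le_max_right y 0) hε).ne').sub
    (continuous_const.mul continuous_id)

lemma drift_lt_drift_of_lt {k a ε ε' : ℝ} (hk : 0 < k) (hε : 0 < ε) (hεε' : ε < ε') (y : ℝ) :
    drift k a ε' y < drift k a ε y := by
  have hdiv : k / (max y 0 + ε') < k / (max y 0 + ε) :=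
    div_lt_div_of_pos_left hk (add_pos_of_nonneg_of_pos (le_max_right y 0) hε) (by linarith)
  unfold drift
  linarith

lemma drift_lt_drift {k a ε ε' y y' : ℝ} (hk : 0 < k) (ha : 0 ≤ a) (hε' : 0 < ε')
    (hy : y' ≤ y) (h : max y' 0 + ε' < max y 0 + ε) : drift k a ε y < drift k a ε' y' := by
  have hdiv : k / (max y 0 + ε) < k / (max y' 0 + ε') :=
    div_lt_div_of_pos_left hk (add_pos_of_nonneg_of_pos (le_max_right y' 0) hε') h
  have hlin : a * y' ≤ a * y := mul_le_mul_of_nonneg_left hy ha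
  unfold drift
  linarith

structure IsRegularizedSolution (Y₀ k a σ ε : ℝ) (g y : ℝ → ℝ) : Prop where
  continuous : Continuous y
  eq_integral : ∀ t, 0 ≤ t → y t = Y₀ + (∫ s in (0:ℝ)..t, drift k a ε (y s)) + σ * g t

namespace IsRegularizedSolution

variable {Y₀ k a σ ε ε₀ : ℝ} {g y y₀ : ℝ → ℝ}

lemma of_integral_eq (hε : 0 < ε) (hy : Continuous y)
    (heq : ∀ t, 0 ≤ t → y t = Y₀ + (∫ s in (0:ℝ)..t, k / ((if 0 < y s then y s else 0) + ε))
      - a * (∫ s in (0:ℝ)..t, y s) + σ * g t) :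
    IsRegularizedSolution Y₀ k a σ ε g y := by
  refine ⟨hy, fun t ht => ?_⟩
  have hmax : ∀ z : ℝ, (if 0 < z then z else 0) = max z 0 := fun z => by
    split_ifs with hz
    exacts [(max_eq_left hz.le).symm, (max_eq_right (not_lt.1 hz)).symm]
  have hint : (∫ s in (0:ℝ)..t, drift k a ε (y s)) =
      (∫ s in (0:ℝ)..t, k / (max (y s) 0 + ε)) - a * ∫ s in (0:ℝ)..t, y s := by
    have hφ : Continuous fun s => k / (max (y s) 0 + ε) :=
      continuous_const.div ((hy.max continuous_const).add continuous_const)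
        fun s => (add_pos_of_nonneg_of_pos (le_max_right (y s) 0) hε).ne'
    rw [← intervalIntegral.integral_const_mul, ← intervalIntegral.integral_sub
      (hφ.intervalIntegrable 0 t) ((hy.const_mul a).intervalIntegrable 0 t)]
    rfl
  rw [heq t ht, hint]
  simp only [hmax]
  ring

lemma apply_zero (h : IsRegularizedSolution Y₀ k a σ ε g y) : y 0 = Y₀ + σ * g 0 := by
  simp [h.eq_integral 0 le_rfl]

lemma hasDerivWithinAt_sub (h : IsRegularizedSolution Y₀ k a σ ε g y)
    (h₀ : IsRegularizedSolution Y₀ k a σ ε₀ g y₀) (hε : 0 < ε) (hε₀ : 0 < ε₀) {x : ℝ}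
    (hx : 0 ≤ x) :
    HasDerivWithinAt (fun t => y t - y₀ t) (drift k a ε (y x) - drift k a ε₀ (y₀ x)) (Ici x) x :=
  hasDerivWithinAt_sub_of_eq_integral (φ := fun s => drift k a ε (y s))
    (ψ := fun s => drift k a ε₀ (y₀ s)) ((continuous_drift hε).comp h.continuous)
    ((continuous_drift hε₀).comp h₀.continuous) h.eq_integral h₀.eq_integral hx

lemma le_of_eps_lt (h : IsRegularizedSolution Y₀ k a σ ε g y)
    (h₀ : IsRegularizedSolution Y₀ k a σ ε₀ g y₀) (hk : 0 < k) (hε : 0 < ε) (hεε₀ : ε < ε₀)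
    {t : ℝ} (ht : 0 ≤ t) : y₀ t ≤ y t := by
  have hε₀ : 0 < ε₀ := hε.trans hεε₀
  refine sub_nonpos.1 <| le_of_hasDerivWithinAt_neg_of_eq (l := 0)
    (h₀.continuous.sub h.continuous).continuousOn
    (fun x hx => h₀.hasDerivWithinAt_sub h hε₀ hε hx.1) (by simp [h.apply_zero, h₀.apply_zero])
    (fun x _ hx => ?_) ⟨ht, le_rfl⟩
  rw [sub_eq_zero.1 hx, sub_neg]
  exact drift_lt_drift_of_lt hk hε hεε₀ _

lemma sub_le_of_sub_le_left (h : IsRegularizedSolution Y₀ k a σ ε g y)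
    (h₀ : IsRegularizedSolution Y₀ k a σ ε₀ g y₀) (hk : 0 < k) (ha : 0 ≤ a) (hε : 0 < ε)
    (hε₀ : 0 < ε₀) {θ l r : ℝ} (hε₀θ : ε₀ ≤ θ) (hl : 0 ≤ l) (hpos : ∀ s ∈ Icc l r, 0 < y₀ s)
    (hleft : y l - y₀ l ≤ θ) {s : ℝ} (hs : s ∈ Icc l r) : y s - y₀ s ≤ θ := by
  refine le_of_hasDerivWithinAt_neg_of_eq (h.continuous.sub h₀.continuous).continuousOn
    (fun x hx => h.hasDerivWithinAt_sub h₀ hε hε₀ (hl.trans hx.1)) hleft (fun x hx hxθ => ?_) hs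
  have hpx : 0 < y₀ x := hpos x (Ico_subset_Icc_self hx)
  have hxθ : y x - y₀ x = θ := hxθ
  rw [sub_neg]
  refine drift_lt_drift hk ha hε₀ (by linarith) ?_
  rw [max_eq_left hpx.le]
  linarith [le_max_left (y x) 0]

end IsRegularizedSolution

section Family

variable {Y₀ k a σ : ℝ} {g : ℝ → ℝ} {Y : ℝ → ℝ → ℝ} {Ylim : ℝ → ℝ}

lemma antitoneOn_regularizedSolution (hk : 0 < k)
    (hY : ∀ ε, 0 < ε → IsRegularizedSolution Y₀ k a σ ε g (Y ε)) {t : ℝ} (ht : 0 ≤ t) :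
    AntitoneOn (fun ε => Y ε t) (Ioi 0) := by
  intro ε hε ε₀ hε₀ hεε₀
  rcases hεε₀.eq_or_lt with rfl | hlt
  · exact le_rfl
  · exact (hY ε hε).le_of_eps_lt (hY ε₀ hε₀) hk hε hlt ht

lemma regularizedSolution_le_of_tendsto (hk : 0 < k)
    (hY : ∀ ε, 0 < ε → IsRegularizedSolution Y₀ k a σ ε g (Y ε)) {t L ε : ℝ} (ht : 0 ≤ t)
    (hlim : Tendsto (fun ε => Y ε t) (𝓝[>] 0) (𝓝 L)) (hε : 0 < ε) : Y ε t ≤ L :=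
  ge_of_tendsto hlim <| by
    filter_upwards [Ioo_mem_nhdsGT hε] with ε' hε'
    exact antitoneOn_regularizedSolution hk hY ht hε'.1 hε hε'.2.le

theorem tendstoUniformlyOn_regularizedSolution (hk : 0 < k) (ha : 0 ≤ a)
    (hY : ∀ ε, 0 < ε → IsRegularizedSolution Y₀ k a σ ε g (Y ε))
    (hlim : ∀ t, 0 ≤ t → Tendsto (fun ε => Y ε t) (𝓝[>] 0) (𝓝 (Ylim t))) {l r : ℝ}
    (hl : 0 ≤ l) (hpos : ∀ᶠ ε in 𝓝[>] 0, ∀ s ∈ Icc l r, 0 < Y ε s) :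
    TendstoUniformlyOn Y Ylim (𝓝[>] 0) (Icc l r) := by
  rw [Metric.tendstoUniformlyOn_iff]
  intro θ hθ
  obtain ⟨ε₀, ⟨hε₀, hε₀θ⟩, hpos₀, hclose⟩ : ∃ ε₀, ε₀ ∈ Ioo 0 (θ / 2) ∧
      (∀ s ∈ Icc l r, 0 < Y ε₀ s) ∧ Ylim l - θ / 2 < Y ε₀ l :=
    (Eventually.and (Ioo_mem_nhdsGT (half_pos hθ))
      (hpos.and ((hlim l hl).eventually (eventually_gt_nhds (by linarith))))).exists
  have hupper : ∀ s ∈ Icc l r, Ylim s ≤ Y ε₀ s + θ / 2 := by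
    intro s hs
    refine le_of_tendsto (hlim s (hl.trans hs.1)) ?_
    filter_upwards [self_mem_nhdsWithin] with ε hε
    have hleft := regularizedSolution_le_of_tendsto hk hY hl (hlim l hl) hε
    have := (hY ε hε).sub_le_of_sub_le_left (hY ε₀ hε₀) hk ha hε hε₀ hε₀θ.le hl hpos₀
      (by linarith) hs
    linarith
  filter_upwards [Ioc_mem_nhdsGT hε₀] with ε hε s hs
  have hs₀ : 0 ≤ s := hl.trans hs.1
  have hlower := regularizedSolution_le_of_tendsto hk hY hs₀ (hlim s hs₀) hε.1
  have hmono := antitoneOn_regularizedSolution hk hY hs₀ hε.1 hε₀ hε.2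
  rw [Real.dist_eq, abs_of_nonneg (by linarith)]
  linarith [hupper s hs]

end Family

theorem limit_process_continuous_on_positivity_set_general
    (Y₀ k a σ : ℝ) (hk : 0 < k) (ha : 0 < a)
    (g : ℝ → ℝ) (hg0 : g 0 = 0)
    (Y : ℝ → ℝ → ℝ) (Ylim : ℝ → ℝ)
    (hYc : ∀ ε : ℝ, 0 < ε → Continuous (Y ε))
    (hYeq : ∀ ε : ℝ, 0 < ε → ∀ t : ℝ, 0 ≤ t →
      Y ε t = Y₀ + (∫ s in (0:ℝ)..t, k / ((if 0 < Y ε s then Y ε s else 0) + ε))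
        - a * (∫ s in (0:ℝ)..t, Y ε s) + σ * g t)
    (hlim : ∀ t : ℝ, 0 ≤ t →
      Tendsto (fun ε => Y ε t) (𝓝[>] 0) (𝓝 (Ylim t))) :
    Ylim 0 = Y₀ ∧
    ∀ t : ℝ, 0 ≤ t → 0 < Ylim t → ContinuousWithinAt Ylim (Set.Ici (0:ℝ)) t := by
  have hY : ∀ ε, 0 < ε → IsRegularizedSolution Y₀ k a σ ε g (Y ε) :=
    fun ε hε => .of_integral_eq hε (hYc ε hε) (hYeq ε hε)
  refine ⟨tendsto_nhds_unique (hlim 0 le_rfl) (tendsto_const_nhds.congr' ?_),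
    fun t₀ ht₀ hpos => ?_⟩
  · filter_upwards [self_mem_nhdsWithin] with ε hε
    simp [(hY ε hε).apply_zero, hg0]
  obtain ⟨ε₁, hε₁, hpos₁⟩ := (eventually_mem_nhdsWithin.and
    ((hlim t₀ ht₀).eventually (eventually_gt_nhds hpos))).exists
  obtain ⟨l, r, hl, hsub, hmem⟩ := exists_Icc_subset_mem_nhdsWithin_Ici (a := 0)
    ((hYc ε₁ hε₁).continuousAt.eventually (eventually_gt_nhds hpos₁))
  have hposε : ∀ᶠ ε in 𝓝[>] 0, ∀ s ∈ Icc l r, 0 < Y ε s := by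
    filter_upwards [Ioc_mem_nhdsGT hε₁] with ε hε s hs
    exact (hsub hs).trans_le (antitoneOn_regularizedSolution hk hY (hl.trans hs.1) hε.1 hε₁ hε.2)
  have hcont : ContinuousOn Ylim (Icc l r) :=
    (tendstoUniformlyOn_regularizedSolution hk ha.le hY hlim hl hposε).continuousOn
      ((eventually_mem_nhdsWithin (s := Ioi (0:ℝ))).mono
        fun ε hε => (hYc ε hε).continuousOn).frequently
  exact (hcont t₀ (mem_of_mem_nhdsWithin (s := Ici 0) ht₀ hmem)).mono_of_mem_nhdsWithin hmem

/-- Part 2 of Theorem 3: the limit process Y is continuous (within [0,∞)) at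
every point of its positivity set, including t = 0 where Y(0) = Y₀ > 0. -/
theorem limit_process_continuous_on_positivity_set
    (Y₀ k a σ : ℝ) (hY₀ : 0 < Y₀) (hk : 0 < k) (ha : 0 < a) (hσ : 0 < σ)
    (g : ℝ → ℝ) (hg : Continuous g) (hg0 : g 0 = 0)
    (Y : ℝ → ℝ → ℝ) (Ylim : ℝ → ℝ)
    (hYc : ∀ ε : ℝ, 0 < ε → Continuous (Y ε))
    (hYeq : ∀ ε : ℝ, 0 < ε → ∀ t : ℝ, 0 ≤ t →
      Y ε t = Y₀ + (∫ s in (0:ℝ)..t, k / ((if 0 < Y ε s then Y ε s else 0) + ε))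
        - a * (∫ s in (0:ℝ)..t, Y ε s) + σ * g t)
    (hlim : ∀ t : ℝ, 0 ≤ t →
      Tendsto (fun ε => Y ε t) (𝓝[>] 0) (𝓝 (Ylim t))) :
    Ylim 0 = Y₀ ∧
    ∀ t : ℝ, 0 ≤ t → 0 < Ylim t → ContinuousWithinAt Ylim (Set.Ici (0:ℝ)) t :=
  limit_process_continuous_on_positivity_set_general Y₀ k a σ hk ha g hg0 Y Ylim hYc hYeq hlim
end
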